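/- Let n ≥ 1, let l_1, …, l_{n−1} and m_1, …, m_n be real numbers, and define the 3×3 polynomial matrices L_k = [[1, l_k, l_k²/2],[0,1,l_k],[0,0,1]] and G_k(z) = [[1,0,0],[0,1,0],[−2 m_k z,0,1]], and the transition matrix S(z) = G_n(z) L_{n−1} G_{n−1}(z) ⋯ L_1 G_1(z). Let J be the 3×3 matrix with J_{13} = J_{31} = 1, J_{22} = −1 and all other entries zero. Then S(−z)ᵗ J S(z) J = I for all z. -/
import Mathlib


open Polynomial Matrix

/-- The transfer matrix `L_k` of the discrete cubic string (with gap `l`). -/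
noncomputable def Lmat (l : ℝ) : Matrix (Fin 3) (Fin 3) (Polynomial ℝ) :=
  !![1, Polynomial.C l, Polynomial.C (l ^ 2 / 2);
     0, 1, Polynomial.C l;
     0, 0, 1]

/-- The transfer matrix `G_k(z)` of the discrete cubic string (with mass `m`). -/
noncomputable def Gmat (m : ℝ) : Matrix (Fin 3) (Fin 3) (Polynomial ℝ) :=
  !![1, 0, 0;
     0, 1, 0;
     Polynomial.C (-2 * m) * Polynomial.X, 0, 1]

/-- The transition matrix `S(z) = G_n(z) L_{n−1} G_{n−1}(z) ⋯ L_1 G_1(z)` of the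
discrete cubic string with masses `m 1, …, m n` and gaps `l 1, …, l (n−1)`. -/
noncomputable def transMat (m l : ℕ → ℝ) : ℕ → Matrix (Fin 3) (Fin 3) (Polynomial ℝ)
  | 0 => 1
  | 1 => Gmat (m 1)
  | (k + 2) => Gmat (m (k + 2)) * Lmat (l (k + 1)) * transMat m l (k + 1)


noncomputable def φ : Polynomial ℝ →+* Polynomial ℝ :=
  Polynomial.eval₂RingHom Polynomial.C (-Polynomial.X)

lemma φ_apply (p : Polynomial ℝ) : φ p = p.comp (-Polynomial.X) := rfl

noncomputable def Jmat : Matrix (Fin 3) (Fin 3) (Polynomial ℝ) := !![0, 0, 1; 0, -1, 0; 1, 0, 0]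

lemma key_mul {A B : Matrix (Fin 3) (Fin 3) (Polynomial ℝ)}
    (hA : (A.map φ)ᵀ * Jmat * A = Jmat) (hB : (B.map φ)ᵀ * Jmat * B = Jmat) :
    (((A * B).map φ))ᵀ * Jmat * (A * B) = Jmat := by
  have : (A * B).map φ = A.map φ * B.map φ := by
    simpa using (φ.mapMatrix.map_mul A B)
  rw [this, transpose_mul]
  have h1 : (B.map φ)ᵀ * (A.map φ)ᵀ * Jmat * (A * B)
      = (B.map φ)ᵀ * (((A.map φ)ᵀ * Jmat * A) * B) := by
    simp only [mul_assoc]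
  rw [h1, hA, ← mul_assoc]
  exact hB

lemma key_L (l : ℝ) : ((Lmat l).map φ)ᵀ * Jmat * Lmat l = Jmat := by
  ext i j
  fin_cases i <;> fin_cases j <;>
    simp [Lmat, Jmat, φ_apply, mul_apply, Fin.sum_univ_three, transpose, Matrix.vecHead,
      Matrix.vecTail, Polynomial.coeff_C] <;>
    split_ifs <;> ring

lemma key_G (m : ℝ) : ((Gmat m).map φ)ᵀ * Jmat * Gmat m = Jmat := by
  ext i j
  fin_cases i <;> fin_cases j <;>
    simp [Gmat, Jmat, φ_apply, mul_apply, Fin.sum_univ_three, transpose, Matrix.vecHead,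
      Matrix.vecTail, mul_comm]

lemma key_S (m l : ℕ → ℝ) (n : ℕ) :
    ((transMat m l n).map φ)ᵀ * Jmat * transMat m l n = Jmat := by
  induction n using Nat.strong_induction_on with
  | _ n ih =>
    match n with
    | 0 => ext i j; fin_cases i <;> fin_cases j <;>
        simp [transMat, Jmat, mul_apply, Fin.sum_univ_three, transpose, Matrix.vecHead,
          Matrix.vecTail]
    | 1 => exact key_G _
    | (k + 2) =>
      exact key_mul (key_mul (key_G _) (key_L _)) (ih (k+1) (by omega))

/-- **The symmetry `S(−z)ᵗ J S(z) J = I` of the transition matrix.**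
Here `S(−z)` is obtained from `S(z)` by composing every entry with `−z`, and
`J` is the matrix with `J_{13} = J_{31} = 1`, `J_{22} = −1` and zeros elsewhere. -/
theorem stmt5 (n : ℕ) (hn : 1 ≤ n) (m l : ℕ → ℝ) :
    ((transMat m l n).map (fun p => p.comp (-Polynomial.X)))ᵀ *
        (!![0, 0, 1; 0, -1, 0; 1, 0, 0] : Matrix (Fin 3) (Fin 3) (Polynomial ℝ)) *
        transMat m l n *
        (!![0, 0, 1; 0, -1, 0; 1, 0, 0] : Matrix (Fin 3) (Fin 3) (Polynomial ℝ))
      = 1 := by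
  have h := key_S m l n
  have hm : (transMat m l n).map (fun p => p.comp (-Polynomial.X)) = (transMat m l n).map φ := rfl
  rw [hm]
  show ((transMat m l n).map φ)ᵀ * Jmat * transMat m l n * Jmat = 1
  rw [h]
  ext i j; fin_cases i <;> fin_cases j <;>
    simp [Jmat, mul_apply, Fin.sum_univ_three, Matrix.one_apply, Matrix.vecHead, Matrix.vecTail]
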